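/- Let χ be a Dirichlet character of conductor f, N ≥ 1, S_m(x) = Σ_{a=1}^{f} χ(a)(x+a)^m, and define T̃_r(k) = (-N!)^r · Σ_{i_1+⋯+i_r = k, i_j ≥ 0} 1/((N+i_1)!···(N+i_r)!) with T̃_0(0) = 1 and T̃_0(k) = 0 for k ≥ 1. Then for n ≥ 1: B_{N,n,χ}(x) = Σ_{k=0}^{n} (k!/f^{N-k}) · binomial(n,k) · Σ_{r=0}^{k} binomial(k+1, r+1) · T̃_r(k) · S_{n-k}(x). -/

import Mathlib

/-!
Write `D(t) = Σ_m N! (f t)^m / (N + m)!`, so that the generating function of `B_{N,n,χ}(x)` is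
`f^{-N} (Σ_a χ(a) e^{(x+a)t}) D(t)⁻¹`. Since `D` has constant term `1`, `t^{k+1}` divides
`(1 - D)^{k+1} = 1 - D · Σ_{r ≤ k} C(k+1, r+1) (-D)^r`, so up to order `k` the inverse `D⁻¹` is that
polynomial in `D`. The `t^k`-coefficient of `D^r` is a sum over compositions of `k` into `r` parts,
which is `f^k (-1)^r T̃_r(k)`; a Cauchy product with the exponentials gives the formula.
-/

open PowerSeries Finset

noncomputable def eSer (c : ℂ) : PowerSeries ℂ := PowerSeries.mk fun n => c ^ n / n.factorial

noncomputable def dSer (N f : ℕ) : PowerSeries ℂ :=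
  PowerSeries.mk fun m => (N.factorial : ℂ) * (f : ℂ) ^ m / (N + m).factorial

noncomputable def hB (N n : ℕ) : ℂ :=
  n.factorial * PowerSeries.coeff n (dSer N 1)⁻¹

noncomputable def hBP (N n : ℕ) (x : ℂ) : ℂ :=
  n.factorial * PowerSeries.coeff n (eSer x * (dSer N 1)⁻¹)

noncomputable def gBP (N f : ℕ) (χ : DirichletCharacter ℂ f) (n : ℕ) (x : ℂ) : ℂ :=
  n.factorial * PowerSeries.coeff n
    (((f : ℂ) ^ N)⁻¹ • ((∑ a ∈ Finset.Icc 1 f, (PowerSeries.C (χ (a : ZMod f))) * eSer (x + a)) * (dSer N f)⁻¹))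

noncomputable def gB (N f : ℕ) (χ : DirichletCharacter ℂ f) (n : ℕ) : ℂ := gBP N f χ n 0

theorem PowerSeries.coeff_pow_eq_sum_antidiagonalTuple {R : Type*} [CommSemiring R]
    (φ : R⟦X⟧) (r k : ℕ) :
    coeff k (φ ^ r) = ∑ i ∈ Nat.antidiagonalTuple r k, ∏ j, coeff (i j) φ := by
  rw [← Fin.prod_const, coeff_prod, ← piAntidiag_univ_fin_eq_antidiagonalTuple, finsuppAntidiag,
    sum_map]
  exact sum_attach _ fun (i : Fin r → ℕ) => ∏ j, coeff (i j) φ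

theorem one_sub_one_sub_pow_succ {R : Type*} [CommRing R] (y : R) (k : ℕ) :
    1 - (1 - y) ^ (k + 1) =
      y * ∑ r ∈ range (k + 1), ((k + 1).choose (r + 1) : R) * (-1) ^ r * y ^ r := by
  rw [sub_eq_neg_add 1 y, add_pow, sum_range_succ', mul_sum]
  simp only [one_pow, mul_one, pow_zero, Nat.choose_zero_right, Nat.cast_one, sub_add_cancel_right,
    ← sum_neg_distrib]
  refine sum_congr rfl fun r _ => ?_
  ring

theorem PowerSeries.coeff_inv_eq_sum_choose_mul_coeff_pow {K : Type*} [Field K] (D : K⟦X⟧)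
    (hD : constantCoeff D = 1) (k : ℕ) :
    coeff k D⁻¹ =
      ∑ r ∈ range (k + 1), ((k + 1).choose (r + 1) : K) * (-1) ^ r * coeff k (D ^ r) := by
  set G := ∑ r ∈ range (k + 1), ((k + 1).choose (r + 1) : K⟦X⟧) * (-1) ^ r * D ^ r
  have hG : D⁻¹ = G + D⁻¹ * (1 - D) ^ (k + 1) := by
    have hDG : D * G = 1 - (1 - D) ^ (k + 1) := (one_sub_one_sub_pow_succ D k).symm
    calc D⁻¹ = D⁻¹ * (D * G + (1 - D) ^ (k + 1)) := by rw [hDG, sub_add_cancel, mul_one]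
      _ = G + D⁻¹ * (1 - D) ^ (k + 1) := by
        rw [mul_add, ← mul_assoc, PowerSeries.inv_mul_cancel _ (by simp [hD]), one_mul]
  have hX : X ^ (k + 1) ∣ D⁻¹ * (1 - D) ^ (k + 1) :=
    Dvd.dvd.mul_left (pow_dvd_pow_of_dvd (X_dvd_iff.mpr (by simp [hD])) _) _
  rw [hG, map_add, X_pow_dvd_iff.mp hX k k.lt_succ_self, add_zero, map_sum]
  refine sum_congr rfl fun r _ => ?_
  rw [← map_natCast C, ← map_one C, ← map_neg C, ← map_pow, ← map_mul, coeff_C_mul]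

theorem coeff_sum_C_mul_eSer {ι : Type*} (s : Finset ι) (w c : ι → ℂ) (m : ℕ) :
    coeff m (∑ a ∈ s, C (w a) * eSer (c a)) = (∑ a ∈ s, w a * c a ^ m) / m.factorial := by
  simp [eSer, map_sum, coeff_C_mul, sum_div, mul_div_assoc]

theorem coeff_dSer (N f m : ℕ) :
    coeff m (dSer N f) = N.factorial * (f : ℂ) ^ m * ((N + m).factorial : ℂ)⁻¹ := by
  simp [dSer, div_eq_mul_inv]

theorem constantCoeff_dSer (N f : ℕ) : constantCoeff (dSer N f) = 1 := by
  rw [← coeff_zero_eq_constantCoeff_apply, coeff_dSer]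
  simp [Nat.factorial_ne_zero]

theorem coeff_dSer_pow (N f r k : ℕ) :
    coeff k (dSer N f ^ r) = (N.factorial : ℂ) ^ r * (f : ℂ) ^ k *
      ∑ i ∈ Nat.antidiagonalTuple r k, ∏ j, ((N + i j).factorial : ℂ)⁻¹ := by
  rw [coeff_pow_eq_sum_antidiagonalTuple, mul_sum]
  refine sum_congr rfl fun i hi => ?_
  rw [Nat.mem_antidiagonalTuple] at hi
  simp only [coeff_dSer, prod_mul_distrib, prod_const, card_univ, Fintype.card_fin,
    prod_pow_eq_pow_sum, hi]

/-- The paper's `T̃_r(k)`; for `r = 0` the empty tuple gives `T̃_0(0) = 1` and `T̃_0(k) = 0`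
for `k ≥ 1`. -/
noncomputable def tildeT (N r k : ℕ) : ℂ :=
  (-(N.factorial : ℂ)) ^ r * ∑ i ∈ Nat.antidiagonalTuple r k, ∏ j, ((N + i j).factorial : ℂ)⁻¹

theorem coeff_inv_dSer (N f k : ℕ) :
    coeff k (dSer N f)⁻¹ =
      (f : ℂ) ^ k * ∑ r ∈ range (k + 1), ((k + 1).choose (r + 1) : ℂ) * tildeT N r k := by
  rw [coeff_inv_eq_sum_choose_mul_coeff_pow _ (constantCoeff_dSer N f), mul_sum]
  refine sum_congr rfl fun r _ => ?_
  rw [coeff_dSer_pow, tildeT, neg_pow]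
  ring

theorem stmt15_general (N f : ℕ) (χ : DirichletCharacter ℂ f) (n : ℕ) (x : ℂ) :
    gBP N f χ n x = ∑ k ∈ Finset.range (n + 1),
      (k.factorial : ℂ) / (f : ℂ) ^ ((N : ℤ) - (k : ℤ)) * (n.choose k : ℂ) *
      (∑ r ∈ Finset.range (k + 1),
        ((k + 1).choose (r + 1) : ℂ) * ((-(N.factorial : ℂ)) ^ r *
          ∑ i ∈ Finset.Nat.antidiagonalTuple r k, ∏ j, ((N + i j).factorial : ℂ)⁻¹)) *
      (∑ a ∈ Finset.Icc 1 f, χ (a : ZMod f) * (x + (a : ℂ)) ^ (n - k)) := by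
  obtain rfl | hf := eq_or_ne f 0
  · simp [gBP]
  rw [gBP, map_smul, mul_comm _ (dSer N f)⁻¹, coeff_mul, Nat.sum_antidiagonal_eq_sum_range_succ_mk,
    smul_eq_mul, mul_sum, mul_sum]
  refine sum_congr rfl fun k hk => ?_
  rw [coeff_inv_dSer, coeff_sum_C_mul_eSer, zpow_sub₀ (by exact_mod_cast hf), zpow_natCast,
    zpow_natCast, Nat.cast_choose ℂ (Nat.lt_succ_iff.mp (mem_range.mp hk))]
  simp only [tildeT]
  field_simp
  rw [mul_div_mul_right _ _ (Nat.cast_ne_zero.mpr k.factorial_ne_zero)]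

theorem stmt15 (N f : ℕ) (hN : 1 ≤ N) (hf : 0 < f) (χ : DirichletCharacter ℂ f)
    (hχ : χ.IsPrimitive) (n : ℕ) (hn : 1 ≤ n) (x : ℂ) :
    gBP N f χ n x = ∑ k ∈ Finset.range (n + 1),
      (k.factorial : ℂ) / (f : ℂ) ^ ((N : ℤ) - (k : ℤ)) * (n.choose k : ℂ) *
      (∑ r ∈ Finset.range (k + 1),
        ((k + 1).choose (r + 1) : ℂ) * ((-(N.factorial : ℂ)) ^ r *
          ∑ i ∈ Finset.Nat.antidiagonalTuple r k, ∏ j, ((N + i j).factorial : ℂ)⁻¹)) *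
      (∑ a ∈ Finset.Icc 1 f, χ (a : ZMod f) * (x + (a : ℂ)) ^ (n - k)) :=
  stmt15_general N f χ n x
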